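/- (Semantic correctness of the axiom for ⊀, equation (3).) For all a b : α: stage(a) ≥ stage(b) if and only if b ∈ F ∅, or there exists c : α with (stage(a) > stage(c) ∨ stage(a) = f + 1) and stage(c) + 1 = stage(b), or F ∅ = ∅. That is, a is not derived strictly before b exactly when b is derived in the first stage, or some c is derived immediately before b and a is not derived before c, or nothing can be derived at all. -/

import Mathlib

/- Stage `j + 1` is nonempty for every `j < f`: otherwise `F^[j + 1] ∅ = F^[j] ∅` would contradict the
minimality of `f`. Hence if `stage b = j + 2` there is a `c` with `stage c = j + 1`, and `stage a ≥ stage b`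
forces `stage a > stage c`; the case `stage b = 1` is `b ∈ F ∅`, or `f = 0` and then `F ∅ = F^[f] ∅` is the
empty fixed point. Conversely each disjunct bounds `stage b` by `stage a`, all stages lying in `[1, f + 1]`. -/

/- The stage of an atom `a` under the staged fixed-point computation
(Algorithm 2): the least `l` with `a ∈ F^[l] ∅` if `a` belongs to the
fixed point `F^[f] ∅`, and `f + 1` otherwise. -/
open Classical in
noncomputable def stage {α : Type*} (F : Set α → Set α) (f : ℕ) (a : α) : ℕ :=
  if a ∈ F^[f] (∅ : Set α) then sInf {l : ℕ | a ∈ F^[l] (∅ : Set α)} else f + 1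

section Stage

variable {α : Type*} {F : Set α → Set α} {f : ℕ}

theorem monotone_iterate_empty (hF : Monotone F) : Monotone fun j => F^[j] (∅ : Set α) :=
  hF.monotone_iterate_of_le_map (Set.empty_subset _)

theorem stage_le_succ (x : α) : stage F f x ≤ f + 1 := by
  unfold stage
  split_ifs with hx
  · exact (Nat.sInf_le hx).trans f.le_succ
  · rfl

theorem stage_le_of_mem (hF : Monotone F) {x : α} {l : ℕ} (hx : x ∈ F^[l] ∅) :
    stage F f x ≤ l := by
  rcases le_or_gt l f with hlf | hfl
  · rw [stage, if_pos (monotone_iterate_empty hF hlf hx)]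
    exact Nat.sInf_le hx
  · exact (stage_le_succ x).trans hfl

theorem mem_of_stage_le (hF : Monotone F) {x : α} {l : ℕ} (hl : stage F f x ≤ l) (hlf : l ≤ f) :
    x ∈ F^[l] ∅ := by
  unfold stage at hl
  split_ifs at hl with hx
  · exact monotone_iterate_empty hF hl (Nat.sInf_mem (s := {l | x ∈ F^[l] ∅}) ⟨f, hx⟩)
  · omega

theorem stage_le_iff (hF : Monotone F) {x : α} {l : ℕ} (hlf : l ≤ f) :
    stage F f x ≤ l ↔ x ∈ F^[l] ∅ :=
  ⟨fun hl => mem_of_stage_le hF hl hlf, stage_le_of_mem hF⟩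

theorem one_le_stage (hF : Monotone F) (x : α) : 1 ≤ stage F f x :=
  Nat.pos_of_ne_zero fun h => Set.notMem_empty x ((stage_le_iff hF f.zero_le).1 h.le)

theorem exists_stage_eq_succ (hF : Monotone F)
    (hfmin : ∀ j : ℕ, F^[j + 1] ∅ = F^[j] ∅ → f ≤ j) {j : ℕ} (hj : j < f) :
    ∃ c : α, stage F f c = j + 1 := by
  have hne : F^[j] ∅ ≠ F^[j + 1] ∅ := fun h => (hfmin j h.symm).not_gt hj
  obtain ⟨c, hc, hc'⟩ :=
    Set.exists_of_ssubset ((monotone_iterate_empty hF j.le_succ).ssubset_of_ne hne)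
  exact ⟨c, le_antisymm (stage_le_of_mem hF hc)
    (Nat.lt_of_not_le fun h => hc' (mem_of_stage_le hF h hj.le))⟩

theorem stage_eq_one_of_map_empty (hF : Monotone F)
    (hfmin : ∀ j : ℕ, F^[j + 1] ∅ = F^[j] ∅ → f ≤ j) (h : F ∅ = ∅) (x : α) :
    stage F f x = 1 := by
  obtain rfl : f = 0 := Nat.le_zero.1 (hfmin 0 h)
  exact le_antisymm (stage_le_succ x) (one_le_stage hF x)

end Stage

theorem nlt_axiom_correct_general
    {α : Type*} (F : Set α → Set α) (hF : Monotone F)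
    (f : ℕ) (hf : F^[f + 1] ∅ = F^[f] ∅)
    (hfmin : ∀ j : ℕ, F^[j + 1] ∅ = F^[j] ∅ → f ≤ j) :
    ∀ a b : α,
      stage F f a ≥ stage F f b ↔
        b ∈ F ∅ ∨
        (∃ c : α, (stage F f a > stage F f c ∨ stage F f a = f + 1) ∧
          stage F f c + 1 = stage F f b) ∨
        F ∅ = ∅ := by
  intro a b
  constructor
  · intro hab
    obtain ⟨j, hj⟩ := Nat.exists_eq_add_of_le' (one_le_stage hF b)
    rcases j with _ | j
    · rcases Nat.eq_zero_or_pos f with rfl | hf0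
      · exact Or.inr (Or.inr hf)
      · exact Or.inl ((stage_le_iff hF hf0).1 hj.le)
    · have hjf : j < f := by have := stage_le_succ (F := F) (f := f) b; omega
      obtain ⟨c, hc⟩ := exists_stage_eq_succ hF hfmin hjf
      exact Or.inr (Or.inl ⟨c, Or.inl (by omega), by omega⟩)
  · rintro (hb | ⟨c, hca | ha, hcb⟩ | hF0)
    · exact (stage_le_of_mem hF (l := 1) hb).trans (one_le_stage hF a)
    · omega
    · exact ha ▸ stage_le_succ b
    · rw [stage_eq_one_of_map_empty hF hfmin hF0 a, stage_eq_one_of_map_empty hF hfmin hF0 b]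

theorem nlt_axiom_correct
    {α : Type*} [Fintype α] (F : Set α → Set α) (hF : Monotone F)
    (f : ℕ) (hf : F^[f + 1] ∅ = F^[f] ∅)
    (hfmin : ∀ j : ℕ, F^[j + 1] ∅ = F^[j] ∅ → f ≤ j) :
    ∀ a b : α,
      stage F f a ≥ stage F f b ↔
        b ∈ F ∅ ∨
        (∃ c : α, (stage F f a > stage F f c ∨ stage F f a = f + 1) ∧
          stage F f c + 1 = stage F f b) ∨
        F ∅ = ∅ :=
  nlt_axiom_correct_general F hF f hf hfmin
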